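/- Let s, t, n_1, …, n_t be positive integers with t ≥ 2 and n_1 ≤ n_2 ≤ ⋯ ≤ n_t, and let G = K_s ∨ (K_{n_1} ∪ K_{n_2} ∪ ⋯ ∪ K_{n_t}). Let y be a positive eigenvector of the signless Laplacian matrix Q(G) = D(G) + A(G) corresponding to the signless Laplacian spectral radius q(G). Then for any indices 1 ≤ i ≤ j ≤ t, any vertex u of the i-th inner copy K_{n_i}, and any vertex v of the j-th inner copy K_{n_j}, one has y_u ≤ y_v. -/

import Mathlib

/-- Adjacency matrix over ℝ (with classical decidability of adjacency). -/
noncomputable def adjMat {V : Type*} [Fintype V] [DecidableEq V] (G : SimpleGraph V) :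
    Matrix V V ℝ :=
  letI := Classical.decRel G.Adj
  G.adjMatrix ℝ

/-- Degree diagonal matrix over ℝ. -/
noncomputable def degMat {V : Type*} [Fintype V] [DecidableEq V] (G : SimpleGraph V) :
    Matrix V V ℝ :=
  letI := Classical.decRel G.Adj
  Matrix.diagonal fun v => (G.degree v : ℝ)

/-- The spectral radius of a graph: the largest eigenvalue of its adjacency matrix. -/
noncomputable def grho {V : Type*} [Fintype V] [DecidableEq V] (G : SimpleGraph V) : ℝ :=
  sSup (spectrum ℝ (adjMat G))

/-- The signless Laplacian spectral radius of a graph: the largest eigenvalue of D(G) + A(G). -/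
noncomputable def gq {V : Type*} [Fintype V] [DecidableEq V] (G : SimpleGraph V) : ℝ :=
  sSup (spectrum ℝ (degMat G + adjMat G))

/-- The graph `K_s ∨ (m K_r ∪ K_{n - s - m*r})` on `Fin n`:
vertices `< s` form the out clique joined to everything, the next `m*r` vertices form
`m` disjoint copies of `K_r`, and the remaining vertices form a clique. -/
def Hgen (n s m r : ℕ) : SimpleGraph (Fin n) where
  Adj u v := u ≠ v ∧ ((u : ℕ) < s ∨ (v : ℕ) < s ∨
    (s + m * r ≤ (u : ℕ) ∧ s + m * r ≤ (v : ℕ)) ∨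
    (s ≤ (u : ℕ) ∧ s ≤ (v : ℕ) ∧ (u : ℕ) < s + m * r ∧ (v : ℕ) < s + m * r ∧
      ((u : ℕ) - s) / r = ((v : ℕ) - s) / r))
  symm := by
    constructor
    rintro u v ⟨h1, h2⟩
    refine ⟨h1.symm, ?_⟩
    rcases h2 with h | h | ⟨h, h'⟩ | ⟨h1', h2', h3', h4', h5'⟩
    · exact Or.inr (Or.inl h)
    · exact Or.inl h
    · exact Or.inr (Or.inr (Or.inl ⟨h', h⟩))
    · exact Or.inr (Or.inr (Or.inr ⟨h2', h1', h4', h3', h5'.symm⟩))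
  loopless := by constructor; rintro u ⟨h1, -⟩; exact h1 rfl

/-- `K_δ ∨ ((δ-k+1) K_1 ∪ K_{n-2δ+k-1})`. -/
def Hndk (n δ k : ℕ) : SimpleGraph (Fin n) := Hgen n δ (δ - k + 1) 1

/-- A graph is `k`-factor-critical if deleting any `k` vertices leaves a graph
with a perfect matching. -/
def kFactorCritical {V : Type*} [Fintype V] (G : SimpleGraph V) (k : ℕ) : Prop :=
  ∀ S : Finset V, S.card = k →
    ∃ M : (G.induce ((S : Set V)ᶜ)).Subgraph, M.IsPerfectMatching


/-- The graph `K_s ∨ (K_{n_1} ∪ ⋯ ∪ K_{n_t})`: the vertices `Sum.inl a` form the out copy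
`K_s` joined to everything, and for each `i : Fin t` the vertices `Sum.inr ⟨i, _⟩` form the
`i`-th inner copy `K_{n_i}`. -/
def outerInner (s t : ℕ) (nn : Fin t → ℕ) :
    SimpleGraph (Fin s ⊕ Σ i : Fin t, Fin (nn i)) where
  Adj u v := u ≠ v ∧ (u.isLeft = true ∨ v.isLeft = true ∨
    ∃ (i : Fin t) (a b : Fin (nn i)), u = Sum.inr ⟨i, a⟩ ∧ v = Sum.inr ⟨i, b⟩)
  symm := by
    constructor
    rintro u v ⟨h1, h2⟩
    refine ⟨h1.symm, ?_⟩
    rcases h2 with h | h | ⟨i, a, b, rfl, rfl⟩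
    · exact Or.inr (Or.inl h)
    · exact Or.inl h
    · exact Or.inr (Or.inr ⟨i, b, a, rfl, rfl⟩)
  loopless := by constructor; rintro u ⟨h1, -⟩; exact h1 rfl

/-!
At a vertex `u` of the `k`-th inner copy, the eigenvalue equation `Q y = μ y` reads
`(μ - s - n_k + 2) y_u = Σ_{copy k} y + Σ_{out copy} y`. The right side does not depend on `u`,
so a positive eigenvector is constant on each inner copy, and then
`(μ - s - 2 n_k + 2) y_u = Σ_{out copy} y > 0`. The coefficient is positive and decreasing in
`n_k`, so `y_u` is increasing in `n_k`.
-/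

open Finset Matrix

theorem degMat_add_adjMat_mulVec_apply {V : Type*} [Fintype V] [DecidableEq V]
    (G : SimpleGraph V) [DecidableRel G.Adj] (y : V → ℝ) (v : V) :
    ((degMat G + adjMat G) *ᵥ y) v = G.degree v * y v + ∑ w ∈ G.neighborFinset v, y w := by
  rw [degMat, adjMat, add_mulVec, Pi.add_apply, mulVec_diagonal,
    SimpleGraph.adjMatrix_mulVec_apply]
  congr!

namespace outerInner

variable {s t : ℕ} {nn : Fin t → ℕ}

theorem adj_inr_inl (p : Σ i : Fin t, Fin (nn i)) (c : Fin s) :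
    (outerInner s t nn).Adj (Sum.inr p) (Sum.inl c) :=
  ⟨Sum.inr_ne_inl, Or.inr (Or.inl rfl)⟩

theorem adj_inr_inr_iff {p p' : Σ i : Fin t, Fin (nn i)} :
    (outerInner s t nn).Adj (Sum.inr p) (Sum.inr p') ↔ p ≠ p' ∧ p.1 = p'.1 := by
  obtain ⟨k, x⟩ := p
  obtain ⟨l, x'⟩ := p'
  simp only [outerInner, ne_eq, Sum.inr.injEq, Sum.isLeft_inr, Bool.false_eq_true, false_or]
  constructor
  · rintro ⟨hne, i, a, b, ha, hb⟩
    simp only [Sigma.mk.inj_iff] at ha hb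
    exact ⟨hne, ha.1.trans hb.1.symm⟩
  · rintro ⟨hne, rfl : k = l⟩
    exact ⟨hne, k, x, x', rfl, rfl⟩

theorem sum_neighborFinset_inr [DecidableRel (outerInner s t nn).Adj]
    (f : (Fin s ⊕ Σ i : Fin t, Fin (nn i)) → ℝ) (k : Fin t) (x : Fin (nn k)) :
    ∑ w ∈ (outerInner s t nn).neighborFinset (Sum.inr ⟨k, x⟩), f w
      = ∑ c, f (Sum.inl c) + (∑ x', f (Sum.inr ⟨k, x'⟩) - f (Sum.inr ⟨k, x⟩)) := by
  rw [SimpleGraph.neighborFinset_eq_filter, sum_filter, Fintype.sum_sum_type,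
    ← univ_sigma_univ, sum_sigma, sum_eq_single k]
  · simp only [adj_inr_inl, if_true, adj_inr_inr_iff, ne_eq, Sigma.mk.inj_iff, heq_eq_eq,
      true_and, and_true]
    rw [sum_ite, sum_const_zero, add_zero, filter_not, filter_eq, if_pos (mem_univ x),
      sum_sdiff_eq_sub (subset_univ _), sum_singleton]
  · intro l _ hlk
    exact sum_eq_zero fun x' _ => if_neg fun h => hlk (adj_inr_inr_iff.1 h).2.symm
  · simp

theorem degree_inr [DecidableRel (outerInner s t nn).Adj] (k : Fin t) (x : Fin (nn k)) :
    ((outerInner s t nn).degree (Sum.inr ⟨k, x⟩) : ℝ) = s + nn k - 1 := by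
  rw [← SimpleGraph.card_neighborFinset_eq_degree, card_eq_sum_ones, Nat.cast_sum,
    sum_neighborFinset_inr]
  simp only [Nat.cast_one, sum_const, card_univ, Fintype.card_fin, nsmul_eq_mul, mul_one]
  ring

variable {μ : ℝ} {y : (Fin s ⊕ Σ i : Fin t, Fin (nn i)) → ℝ}
  (heig : (degMat (outerInner s t nn) + adjMat (outerInner s t nn)) *ᵥ y = μ • y)
include heig

theorem eigenvector_row_inr (k : Fin t) (x : Fin (nn k)) :
    (μ - s - nn k + 2) * y (Sum.inr ⟨k, x⟩)
      = ∑ x', y (Sum.inr ⟨k, x'⟩) + ∑ c, y (Sum.inl c) := by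
  classical
  have row := congrFun heig (Sum.inr ⟨k, x⟩)
  rw [degMat_add_adjMat_mulVec_apply, degree_inr, sum_neighborFinset_inr, Pi.smul_apply,
    smul_eq_mul] at row
  linear_combination -row

variable (hy : ∀ v, 0 < y v)
include hy

theorem eigenvector_inr_eq (k : Fin t) (x x' : Fin (nn k)) :
    y (Sum.inr ⟨k, x⟩) = y (Sum.inr ⟨k, x'⟩) := by
  have hrhs : 0 < ∑ x', y (Sum.inr ⟨k, x'⟩) + ∑ c, y (Sum.inl c) :=
    add_pos_of_pos_of_nonneg (sum_pos (fun _ _ => hy _) ⟨x, mem_univ x⟩)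
      (sum_nonneg fun _ _ => (hy _).le)
  have hcoeff : 0 < μ - s - nn k + 2 :=
    pos_of_mul_pos_left ((eigenvector_row_inr heig k x).symm ▸ hrhs) (hy _).le
  exact mul_left_cancel₀ hcoeff.ne'
    ((eigenvector_row_inr heig k x).trans (eigenvector_row_inr heig k x').symm)

theorem eigenvector_inr_mul_eq (k : Fin t) (x : Fin (nn k)) :
    (μ - s - 2 * nn k + 2) * y (Sum.inr ⟨k, x⟩) = ∑ c, y (Sum.inl c) := by
  have hcopy : ∑ x', y (Sum.inr ⟨k, x'⟩) = nn k * y (Sum.inr ⟨k, x⟩) := by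
    rw [sum_congr rfl fun x' _ => eigenvector_inr_eq heig hy k x' x]
    simp only [sum_const, card_univ, Fintype.card_fin, nsmul_eq_mul]
  linear_combination eigenvector_row_inr heig k x + hcopy

theorem eigenvector_inr_le_of_le (hs : 0 < s) {i j : Fin t} (hij : nn i ≤ nn j)
    (a : Fin (nn i)) (b : Fin (nn j)) : y (Sum.inr ⟨i, a⟩) ≤ y (Sum.inr ⟨j, b⟩) := by
  have hout : 0 < ∑ c, y (Sum.inl c) := sum_pos (fun _ _ => hy _) ⟨⟨0, hs⟩, mem_univ _⟩
  have hj := eigenvector_inr_mul_eq heig hy j b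
  have hcoeff : 0 < μ - s - 2 * nn j + 2 := pos_of_mul_pos_left (hj ▸ hout) (hy _).le
  have hnn : (nn i : ℝ) ≤ nn j := by exact_mod_cast hij
  refine le_of_mul_le_mul_left ?_ hcoeff
  calc (μ - s - 2 * nn j + 2) * y (Sum.inr ⟨i, a⟩)
      ≤ (μ - s - 2 * nn i + 2) * y (Sum.inr ⟨i, a⟩) := by gcongr; exact (hy _).le
    _ = (μ - s - 2 * nn j + 2) * y (Sum.inr ⟨j, b⟩) := by
        rw [eigenvector_inr_mul_eq heig hy i a, hj]

end outerInner

theorem stmt_3_general (s t : ℕ) (hs : 1 ≤ s) (nn : Fin t → ℕ)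
    (hmono : Monotone nn)
    (y : (Fin s ⊕ Σ i : Fin t, Fin (nn i)) → ℝ)
    (hy : ∀ v, 0 < y v)
    (heig : (degMat (outerInner s t nn) + adjMat (outerInner s t nn)).mulVec y
      = gq (outerInner s t nn) • y) :
    ∀ (i j : Fin t), i ≤ j → ∀ (a : Fin (nn i)) (b : Fin (nn j)),
      y (Sum.inr ⟨i, a⟩) ≤ y (Sum.inr ⟨j, b⟩) :=
  fun _ _ hij => outerInner.eigenvector_inr_le_of_le heig hy hs (hmono hij)

/-- Lemma 2.4 (signless Laplacian case): the Perron vector entries are monotone over the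
inner copies. -/
theorem stmt_3 (s t : ℕ) (hs : 1 ≤ s) (ht : 2 ≤ t) (nn : Fin t → ℕ)
    (hpos : ∀ i : Fin t, 1 ≤ nn i) (hmono : Monotone nn)
    (y : (Fin s ⊕ Σ i : Fin t, Fin (nn i)) → ℝ)
    (hy : ∀ v, 0 < y v)
    (heig : (degMat (outerInner s t nn) + adjMat (outerInner s t nn)).mulVec y
      = gq (outerInner s t nn) • y) :
    ∀ (i j : Fin t), i ≤ j → ∀ (a : Fin (nn i)) (b : Fin (nn j)),
      y (Sum.inr ⟨i, a⟩) ≤ y (Sum.inr ⟨j, b⟩) :=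
  stmt_3_general s t hs nn hmono y hy heig
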